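/- arXiv:2101.10864 — 3 statements merged into one kernel-verified Lean document; each statement's English description precedes it below -/
import Mathlib

section
/- Let ξ, λ ∈ R and define A(t,x) = A(ξ(x − λt), e₁) ∈ SO₃(R) (the helical traveling wave). Then the columns Ω = Ae₁, u = Ae₂, v = Ae₃ satisfy: Ω ≡ e₁ is constant, r := (∇·Ω)Ω + (∇·u)u + (∇·v)v = 0, and δ := [(Ω·∇)u]·v + [(u·∇)v]·Ω + [(v·∇)Ω]·u = ξ, where all spatial derivatives are taken in the variable x (the fields being independent of y,z). -/
open Matrix Real

noncomputable section

/-- The antisymmetric cross-product matrix `[w]ₓ` of a vector `w ∈ ℝ³`. -/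
def crossMat (w : Fin 3 → ℝ) : Matrix (Fin 3) (Fin 3) ℝ :=
  !![0, -w 2, w 1; w 2, 0, -w 0; -w 1, w 0, 0]

/-- Rodrigues' formula: `A(θ,n) = I + sin θ [n]ₓ + (1 - cos θ) [n]ₓ²`. -/
def rodrigues (θ : ℝ) (n : Fin 3 → ℝ) : Matrix (Fin 3) (Fin 3) ℝ :=
  1 + Real.sin θ • crossMat n + (1 - Real.cos θ) • (crossMat n * crossMat n)

/-- The helical traveling wave `A(t,x) = A(ξ(x - λt), e₁)`. -/
def HW (ξ lam t x : ℝ) : Matrix (Fin 3) (Fin 3) ℝ :=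
  rodrigues (ξ * (x - lam * t)) ![1, 0, 0]

/-- The column `Ω = A e₁` of the helical wave. -/
def HWΩ (ξ lam t x : ℝ) : Fin 3 → ℝ := fun i => HW ξ lam t x i 0
/-- The column `u = A e₂` of the helical wave. -/
def HWu (ξ lam t x : ℝ) : Fin 3 → ℝ := fun i => HW ξ lam t x i 1
/-- The column `v = A e₃` of the helical wave. -/
def HWv (ξ lam t x : ℝ) : Fin 3 → ℝ := fun i => HW ξ lam t x i 2

/-- Since the fields depend only on the first spatial coordinate `x`, the
divergence of such a field is the `x`-derivative of its first component. -/
def divx (B : ℝ → ℝ → Fin 3 → ℝ) (t x : ℝ) : ℝ :=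
  deriv (fun y => B t y 0) x

/-- `(B·∇)C` for fields depending only on the first spatial coordinate. -/
def dirDerivx (B C : ℝ → ℝ → Fin 3 → ℝ) (t x : ℝ) : Fin 3 → ℝ :=
  fun i => B t x 0 * deriv (fun y => C t y i) x

/-! For the rotation `A(θ, e₁)` the field `Ω = e₁` is constant, while `u` and `v` have vanishing
first components, so every divergence and the derivatives along `u` and `v` vanish. What is
left of `δ` is `∂ₓu · v`, and `∂ₓu = ξ v` because `u, v` turn at the rate `ξ`; hence `δ = ξ |v|² = ξ`. -/

theorem rodrigues_e₁ (θ : ℝ) :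
    rodrigues θ ![1, 0, 0] = !![1, 0, 0; 0, cos θ, -sin θ; 0, sin θ, cos θ] := by
  ext i j
  fin_cases i <;> fin_cases j <;> simp [rodrigues, crossMat]

theorem divx_eq_zero_of_forall_eq {B : ℝ → ℝ → Fin 3 → ℝ} {t : ℝ} (c : ℝ)
    (hB : ∀ y, B t y 0 = c) (x : ℝ) : divx B t x = 0 := by
  simp [divx, hB]

theorem dirDerivx_eq_zero {B : ℝ → ℝ → Fin 3 → ℝ} {t x : ℝ} (hB : B t x 0 = 0)
    (C : ℝ → ℝ → Fin 3 → ℝ) : dirDerivx B C t x = 0 := by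
  ext i; simp [dirDerivx, hB]

theorem dirDerivx_eq_deriv_of_eq_one {B : ℝ → ℝ → Fin 3 → ℝ} {t x : ℝ} (hB : B t x 0 = 1)
    (C : ℝ → ℝ → Fin 3 → ℝ) : dirDerivx B C t x = fun i => deriv (fun y => C t y i) x := by
  ext i; simp [dirDerivx, hB]

section HelicalWave

variable (ξ lam t x : ℝ)

theorem HWΩ_eq : HWΩ ξ lam t x = ![1, 0, 0] := by
  ext i; fin_cases i <;> simp [HWΩ, HW, rodrigues_e₁]

theorem HWu_eq : HWu ξ lam t x = ![0, cos (ξ * (x - lam * t)), sin (ξ * (x - lam * t))] := by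
  ext i; fin_cases i <;> simp [HWu, HW, rodrigues_e₁]

theorem HWv_eq : HWv ξ lam t x = ![0, -sin (ξ * (x - lam * t)), cos (ξ * (x - lam * t))] := by
  ext i; fin_cases i <;> simp [HWv, HW, rodrigues_e₁]

theorem hasDerivAt_HWu (i : Fin 3) :
    HasDerivAt (fun y => HWu ξ lam t y i) (ξ * HWv ξ lam t x i) x := by
  have hθ : HasDerivAt (fun y => ξ * (y - lam * t)) ξ x := by
    simpa using ((hasDerivAt_id x).sub_const (lam * t)).const_mul ξ
  simp only [HWu_eq, HWv_eq]
  fin_cases i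
  · simpa using hasDerivAt_const x (0 : ℝ)
  · simpa [mul_comm] using hθ.cos
  · simpa [mul_comm] using hθ.sin

theorem sum_HWv_mul_self : ∑ i, HWv ξ lam t x i * HWv ξ lam t x i = 1 := by
  simp [HWv_eq, Fin.sum_univ_three, ← sq]

end HelicalWave

theorem helical_wave_Omega_r_delta (ξ lam : ℝ) (t x : ℝ) :
    HWΩ ξ lam t x = ![1, 0, 0] ∧
    (fun i => divx (HWΩ ξ lam) t x * HWΩ ξ lam t x i
        + divx (HWu ξ lam) t x * HWu ξ lam t x i
        + divx (HWv ξ lam) t x * HWv ξ lam t x i) = (0 : Fin 3 → ℝ) ∧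
    (∑ i, dirDerivx (HWΩ ξ lam) (HWu ξ lam) t x i * HWv ξ lam t x i)
      + (∑ i, dirDerivx (HWu ξ lam) (HWv ξ lam) t x i * HWΩ ξ lam t x i)
      + (∑ i, dirDerivx (HWv ξ lam) (HWΩ ξ lam) t x i * HWu ξ lam t x i)
      = ξ := by
  have divΩ : divx (HWΩ ξ lam) t x = 0 := divx_eq_zero_of_forall_eq 1 (by simp [HWΩ_eq]) x
  have divu : divx (HWu ξ lam) t x = 0 := divx_eq_zero_of_forall_eq 0 (by simp [HWu_eq]) x
  have divv : divx (HWv ξ lam) t x = 0 := divx_eq_zero_of_forall_eq 0 (by simp [HWv_eq]) x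
  have Ωu : dirDerivx (HWΩ ξ lam) (HWu ξ lam) t x = ξ • HWv ξ lam t x := by
    rw [dirDerivx_eq_deriv_of_eq_one (by simp [HWΩ_eq])]
    ext i; exact (hasDerivAt_HWu ξ lam t x i).deriv
  have uv := dirDerivx_eq_zero (by simp [HWu_eq] : HWu ξ lam t x 0 = 0) (HWv ξ lam)
  have vΩ := dirDerivx_eq_zero (by simp [HWv_eq] : HWv ξ lam t x 0 = 0) (HWΩ ξ lam)
  refine ⟨HWΩ_eq ξ lam t x, ?_, ?_⟩
  · ext i; simp [divΩ, divu, divv]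
  · simp only [Ωu, uv, vΩ, Pi.smul_apply, smul_eq_mul, mul_assoc, ← Finset.mul_sum,
      sum_HWv_mul_self, Pi.zero_apply, zero_mul, Finset.sum_const_zero, add_zero, mul_one]
end
end

section
/- Fix ξ, ω ∈ R with ω = c₄ξ for a constant c₄. Then the pair (ρ, A) with ρ ≡ ρ₀ constant and A(t,x,y,z) = A(−ωt,e₃)·A(ξz,e₁) solves the SOHB system: ∂ₜρ + c₁∇ₓ·(ρ A e₁) = 0 and (∂ₜ + c₂(Ae₁)·∇ₓ)A + [(Ae₁)×(c₃∇ₓ log ρ + c₄ r) + c₄ δ (Ae₁)]ₓ A = 0, where r and δ are defined from the columns Ω = Ae₁, u = Ae₂, v = Ae₃ by r = (∇·Ω)Ω + (∇·u)u + (∇·v)v and δ = [(Ω·∇)u]·v + [(u·∇)v]·Ω + [(v·∇)Ω]·u. -/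
open Matrix Real

noncomputable section

/-- Partial derivative `∂ⱼ f` of a scalar field on `ℝ³`. -/
def pd (j : Fin 3) (f : (Fin 3 → ℝ) → ℝ) (x : Fin 3 → ℝ) : ℝ :=
  fderiv ℝ f x (Pi.single j 1)

/-- The cross product of two vectors in `ℝ³`. -/
def crossVec (a b : Fin 3 → ℝ) : Fin 3 → ℝ :=
  ![a 1 * b 2 - a 2 * b 1, a 2 * b 0 - a 0 * b 2, a 0 * b 1 - a 1 * b 0]

/-- Column `k` of a time-dependent matrix field (`k = 0,1,2` give `Ω, u, v`). -/
def col (A : ℝ → (Fin 3 → ℝ) → Matrix (Fin 3) (Fin 3) ℝ) (k : Fin 3)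
    (t : ℝ) (x : Fin 3 → ℝ) : Fin 3 → ℝ :=
  fun i => A t x i k

/-- The divergence of a time-dependent vector field on `ℝ³`. -/
def divg (B : ℝ → (Fin 3 → ℝ) → Fin 3 → ℝ) (t : ℝ) (x : Fin 3 → ℝ) : ℝ :=
  ∑ j, pd j (fun y => B t y j) x

/-- The directional derivative `(B·∇)C` of time-dependent vector fields. -/
def dirD (B C : ℝ → (Fin 3 → ℝ) → Fin 3 → ℝ) (t : ℝ) (x : Fin 3 → ℝ) :
    Fin 3 → ℝ :=
  fun i => ∑ j, B t x j * pd j (fun y => C t y i) x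

/-- The vector `r = (∇·Ω)Ω + (∇·u)u + (∇·v)v` built from the columns of `A`. -/
def rvec (A : ℝ → (Fin 3 → ℝ) → Matrix (Fin 3) (Fin 3) ℝ) (t : ℝ)
    (x : Fin 3 → ℝ) : Fin 3 → ℝ :=
  fun i => divg (col A 0) t x * col A 0 t x i + divg (col A 1) t x * col A 1 t x i
    + divg (col A 2) t x * col A 2 t x i

/-- The scalar `δ = [(Ω·∇)u]·v + [(u·∇)v]·Ω + [(v·∇)Ω]·u`. -/
def deltaS (A : ℝ → (Fin 3 → ℝ) → Matrix (Fin 3) (Fin 3) ℝ) (t : ℝ)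
    (x : Fin 3 → ℝ) : ℝ :=
  (∑ i, dirD (_root_.col A 0) (_root_.col A 1) t x i * _root_.col A 2 t x i)
    + (∑ i, dirD (_root_.col A 1) (_root_.col A 2) t x i * _root_.col A 0 t x i)
    + (∑ i, dirD (_root_.col A 2) (_root_.col A 0) t x i * _root_.col A 1 t x i)

/-- The instantaneous rotation vector
`w = Ω × (c₃ ∇ log ρ + c₄ r) + c₄ δ Ω` of the SOHB system. -/
def wvec (c₃ c₄ : ℝ) (ρ : ℝ → (Fin 3 → ℝ) → ℝ)
    (A : ℝ → (Fin 3 → ℝ) → Matrix (Fin 3) (Fin 3) ℝ) (t : ℝ)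
    (x : Fin 3 → ℝ) : Fin 3 → ℝ :=
  fun i =>
    crossVec (col A 0 t x)
      (fun j => c₃ * pd j (fun y => Real.log (ρ t y)) x + c₄ * rvec A t x j) i
    + c₄ * deltaS A t x * col A 0 t x i

/-- `(ρ, A)` solves the SOHB system. -/
def SolvesSOHB (c₁ c₂ c₃ c₄ : ℝ) (ρ : ℝ → (Fin 3 → ℝ) → ℝ)
    (A : ℝ → (Fin 3 → ℝ) → Matrix (Fin 3) (Fin 3) ℝ) : Prop :=
  (∀ t x, deriv (fun s => ρ s x) t
      + c₁ * ∑ j, pd j (fun y => ρ t y * A t y j 0) x = 0) ∧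
  (∀ t x i j, deriv (fun s => A s x i j) t
      + c₂ * (∑ k, A t x k 0 * pd k (fun y => A t y i j) x)
      + (crossMat (wvec c₃ c₄ ρ A t x) * A t x) i j = 0)

/-! Write `θ = -ωt` and `φ = ξz`. The first column `Ω = A(θ, e₃) e₁` does not depend on `x`
and has `Ω₃ = 0`, so the continuity equation holds trivially and the transport operator
`Ω·∇ = Ω₃ ∂_z` vanishes. The other columns satisfy `∂_z u = ξ v` and `∂_z v = -ξ u`, which
gives `r = ξ (v₃ u - u₃ v)`, `Ω × r = ξ e₃` and `δ = 0`: the rotation vector is `c₄ ξ e₃`.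
Since `∂_t A = -ω [e₃]ₓ A` (from `∂_θ A(θ, n) = [n]ₓ A(θ, n)` for a unit axis `n`), the
orientation equation reduces to `ω = c₄ ξ`. -/

lemma crossMat_smul (c : ℝ) (w : Fin 3 → ℝ) : crossMat (c • w) = c • crossMat w := by
  ext i j
  fin_cases i <;> fin_cases j <;> simp [crossMat]

lemma crossMat_mul_crossMat_mul_crossMat (n : Fin 3 → ℝ) :
    crossMat n * crossMat n * crossMat n = -(n 0 ^ 2 + n 1 ^ 2 + n 2 ^ 2) • crossMat n := by
  ext i j
  fin_cases i <;> fin_cases j <;> simp [crossMat, Matrix.mul_apply, Fin.sum_univ_three] <;> ring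

lemma crossMat_mul_rodrigues {n : Fin 3 → ℝ} (hn : n 0 ^ 2 + n 1 ^ 2 + n 2 ^ 2 = 1) (θ : ℝ) :
    crossMat n * rodrigues θ n =
      cos θ • crossMat n + sin θ • (crossMat n * crossMat n) := by
  have h := crossMat_mul_crossMat_mul_crossMat n
  rw [hn] at h
  simp only [rodrigues, Matrix.mul_add, Matrix.mul_smul, Matrix.mul_one, ← Matrix.mul_assoc, h]
  module

lemma hasDerivAt_rodrigues_apply {n : Fin 3 → ℝ} (hn : n 0 ^ 2 + n 1 ^ 2 + n 2 ^ 2 = 1)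
    (θ : ℝ) (i j : Fin 3) :
    HasDerivAt (fun θ => rodrigues θ n i j) ((crossMat n * rodrigues θ n) i j) θ := by
  rw [crossMat_mul_rodrigues hn]
  simp only [rodrigues, Matrix.add_apply, Matrix.smul_apply, smul_eq_mul]
  have h := (((hasDerivAt_sin θ).mul_const (crossMat n i j)).const_add
    ((1 : Matrix (Fin 3) (Fin 3) ℝ) i j)).fun_add
    (((hasDerivAt_cos θ).const_sub 1).mul_const ((crossMat n * crossMat n) i j))
  exact h.congr_deriv (by ring)

lemma hasDerivAt_rodrigues_mul_apply {n : Fin 3 → ℝ} (hn : n 0 ^ 2 + n 1 ^ 2 + n 2 ^ 2 = 1)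
    (a t : ℝ) (i j : Fin 3) :
    HasDerivAt (fun s => rodrigues (a * s) n i j)
      ((a • (crossMat n * rodrigues (a * t) n)) i j) t := by
  have h := (hasDerivAt_rodrigues_apply hn (a * t) i j).comp t ((hasDerivAt_id t).const_mul a)
  simpa [Function.comp_def, mul_comm] using h

lemma rodrigues_e3 (θ : ℝ) :
    rodrigues θ ![0, 0, 1] = !![cos θ, -sin θ, 0; sin θ, cos θ, 0; 0, 0, 1] := by
  ext i j
  fin_cases i <;> fin_cases j <;> simp [rodrigues, crossMat]

lemma rodrigues_e1 (φ : ℝ) :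
    rodrigues φ ![1, 0, 0] = !![1, 0, 0; 0, cos φ, -sin φ; 0, sin φ, cos φ] := by
  ext i j
  fin_cases i <;> fin_cases j <;> simp [rodrigues, crossMat]

lemma hasDerivAt_matrix_mul_const_apply {m n p : Type*} [Fintype n] {P : ℝ → Matrix m n ℝ}
    {P' : Matrix m n ℝ} {t : ℝ} (hP : ∀ i k, HasDerivAt (fun s => P s i k) (P' i k) t)
    (Q : Matrix n p ℝ) (i : m) (j : p) :
    HasDerivAt (fun s => (P s * Q) i j) ((P' * Q) i j) t := by
  simp only [Matrix.mul_apply]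
  exact HasDerivAt.fun_sum fun k _ => (hP i k).mul_const _

lemma hasDerivAt_const_matrix_mul_apply {m n p : Type*} [Fintype n] {Q : ℝ → Matrix n p ℝ}
    {Q' : Matrix n p ℝ} {t : ℝ} (P : Matrix m n ℝ)
    (hQ : ∀ k j, HasDerivAt (fun s => Q s k j) (Q' k j) t) (i : m) (j : p) :
    HasDerivAt (fun s => (P * Q s) i j) ((P * Q') i j) t := by
  simp only [Matrix.mul_apply]
  exact HasDerivAt.fun_sum fun k _ => (hQ k j).const_mul _

lemma pd_const (j : Fin 3) (c : ℝ) (x : Fin 3 → ℝ) : pd j (fun _ => c) x = 0 := by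
  simp [pd]

lemma pd_comp_coord {g : ℝ → ℝ} {g' : ℝ} (j m : Fin 3) {x : Fin 3 → ℝ}
    (hg : HasDerivAt g g' (x m)) :
    pd j (fun y => g (y m)) x = if j = m then g' else 0 := by
  have hm : HasFDerivAt (fun y : Fin 3 → ℝ => y m)
      (ContinuousLinearMap.proj m : (Fin 3 → ℝ) →L[ℝ] ℝ) x :=
    (ContinuousLinearMap.proj m : (Fin 3 → ℝ) →L[ℝ] ℝ).hasFDerivAt
  have h : HasFDerivAt (fun y : Fin 3 → ℝ => g (y m))
      (g' • (ContinuousLinearMap.proj m : (Fin 3 → ℝ) →L[ℝ] ℝ)) x :=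
    hg.comp_hasFDerivAt x hm
  rw [pd, h.fderiv]
  simp [Pi.single_apply, eq_comm]

def millingField (ω ξ t : ℝ) (x : Fin 3 → ℝ) : Matrix (Fin 3) (Fin 3) ℝ :=
  rodrigues (-ω * t) ![0, 0, 1] * rodrigues (ξ * x 2) ![1, 0, 0]

section millingField

variable (ω ξ t : ℝ) (x : Fin 3 → ℝ)

lemma hasDerivAt_millingField_time (i j : Fin 3) :
    HasDerivAt (fun s => millingField ω ξ s x i j)
      (-ω * (crossMat ![0, 0, 1] * millingField ω ξ t x) i j) t := by
  have h := hasDerivAt_matrix_mul_const_apply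
    (hasDerivAt_rodrigues_mul_apply (n := ![0, 0, 1]) (by simp) (-ω) t)
    (rodrigues (ξ * x 2) ![1, 0, 0]) i j
  simpa [millingField, Matrix.smul_mul, Matrix.mul_assoc] using h

lemma pd_millingField (k i j : Fin 3) :
    pd k (fun y => millingField ω ξ t y i j) x =
      if k = 2 then
        ξ * (rodrigues (-ω * t) ![0, 0, 1] *
          (crossMat ![1, 0, 0] * rodrigues (ξ * x 2) ![1, 0, 0])) i j
      else 0 := by
  have h := hasDerivAt_const_matrix_mul_apply (rodrigues (-ω * t) ![0, 0, 1])
    (hasDerivAt_rodrigues_mul_apply (n := ![1, 0, 0]) (by simp) ξ (x 2)) i j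
  unfold millingField
  rw [pd_comp_coord k 2 h]
  simp

lemma millingField_eq : millingField ω ξ t x =
    !![cos (ω * t), sin (ω * t) * cos (ξ * x 2), -sin (ω * t) * sin (ξ * x 2);
      -sin (ω * t), cos (ω * t) * cos (ξ * x 2), -cos (ω * t) * sin (ξ * x 2);
      0, sin (ξ * x 2), cos (ξ * x 2)] := by
  rw [millingField, rodrigues_e3, rodrigues_e1, Matrix.mul_fin_three]
  simp

lemma millingField_apply_zero (i : Fin 3) :
    millingField ω ξ t x i 0 = ![cos (ω * t), -sin (ω * t), 0] i := by
  fin_cases i <;> simp [millingField_eq]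

lemma rvec_millingField :
    rvec (millingField ω ξ) t x = ξ • ![sin (ω * t), cos (ω * t), 0] := by
  ext i
  simp only [rvec, divg, _root_.col, pd_millingField, Fin.sum_univ_three]
  fin_cases i <;> simp [millingField_eq, rodrigues_e3, rodrigues_e1, crossMat, Matrix.mul_apply,
    Fin.sum_univ_three]
  · linear_combination ξ * sin (ω * t) * sin_sq_add_cos_sq (ξ * x 2)
  · linear_combination ξ * cos (ω * t) * sin_sq_add_cos_sq (ξ * x 2)
  · ring

lemma deltaS_millingField : deltaS (millingField ω ξ) t x = 0 := by
  simp only [deltaS, dirD, _root_.col, pd_millingField, Fin.sum_univ_three]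
  simp [millingField_eq, rodrigues_e3, rodrigues_e1, crossMat, Matrix.mul_apply, Fin.sum_univ_three]
  ring

lemma wvec_millingField (c₃ c₄ ρ₀ : ℝ) :
    wvec c₃ c₄ (fun _ _ => ρ₀) (millingField ω ξ) t x = (c₄ * ξ) • ![0, 0, 1] := by
  ext i
  simp only [wvec, rvec_millingField, deltaS_millingField, pd_const, crossVec, _root_.col]
  fin_cases i <;> simp [millingField_eq]
  linear_combination c₄ * ξ * sin_sq_add_cos_sq (ω * t)

end millingField

theorem milling_orbit_solves_SOHB_general (c₁ c₂ c₃ c₄ ξ ω ρ₀ : ℝ) (hω : ω = c₄ * ξ) :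
    SolvesSOHB c₁ c₂ c₃ c₄ (fun _ _ => ρ₀)
      (fun t x => rodrigues (-ω * t) ![0, 0, 1] *
        rodrigues (ξ * x 2) ![1, 0, 0]) := by
  change SolvesSOHB c₁ c₂ c₃ c₄ (fun _ _ => ρ₀) (millingField ω ξ)
  refine ⟨fun t x => ?_, fun t x i j => ?_⟩
  · simp [millingField_apply_zero, pd_const]
  · have htransport :
        ∑ k, millingField ω ξ t x k 0 * pd k (fun y => millingField ω ξ t y i j) x = 0 := by
      simp [pd_millingField, millingField_apply_zero]
    rw [(hasDerivAt_millingField_time ω ξ t x i j).deriv, htransport, wvec_millingField,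
      crossMat_smul, Matrix.smul_mul, Matrix.smul_apply, hω, smul_eq_mul]
    ring

theorem milling_orbit_solves_SOHB (c₁ c₂ c₃ c₄ ξ ω ρ₀ : ℝ)
    (hρ₀ : 0 < ρ₀) (hω : ω = c₄ * ξ) :
    SolvesSOHB c₁ c₂ c₃ c₄ (fun _ _ => ρ₀)
      (fun t x => rodrigues (-ω * t) ![0, 0, 1] *
        rodrigues (ξ * x 2) ![1, 0, 0]) :=
  milling_orbit_solves_SOHB_general c₁ c₂ c₃ c₄ ξ ω ρ₀ hω

end
end

section
/- Let 𝔸 : D → SO₃(R) be a measurable field on a bounded domain D ⊂ R^3, ρ the uniform probability density on D, and define GOP(ρ,𝔸) = (1/2)(c₁/c₀)² ∬_{D×D} 𝔸(x)·𝔸(x̃) ρ(x)ρ(x̃) dx dx̃ + 1/4 with A·B = (1/2)Tr(AᵀB). If 𝔸(x) = A(ξz, e₁) (the perpendicular twist, z the third coordinate of x) on D = [0,L]³ with ξ = 2πn/L for a nonzero integer n, then GOP = (1/4)(c₁/c₀)² + 1/4. If instead 𝔸 is constant, then GOP = (3/4)(c₁/c₀)² + 1/4. -/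
open Matrix Real MeasureTheory

noncomputable section

/-- The inner product `A · B = (1/2) Tr(Aᵀ B)` on `3 × 3` real matrices. -/
def matInner (A B : Matrix (Fin 3) (Fin 3) ℝ) : ℝ :=
  (1 / 2) * Matrix.trace (Aᵀ * B)

/-- The cube `[0,L]³ ⊂ ℝ³`. -/
def box (L : ℝ) : Set (Fin 3 → ℝ) := Set.Icc 0 (fun _ => L)

/-- The global order parameter of a body-orientation field `𝔸` on `[0,L]³`,
with respect to the uniform density `ρ = 1/L³` and alignment ratio `c₁/c₀`. -/
def GOP (ratio L : ℝ) (𝔸 : (Fin 3 → ℝ) → Matrix (Fin 3) (Fin 3) ℝ) : ℝ :=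
  (1 / 2) * ratio ^ 2 *
    (∫ x in box L, ∫ y in box L,
      matInner (𝔸 x) (𝔸 y) * (1 / L ^ 3) * (1 / L ^ 3)) + 1 / 4

/-!
If every inner integral `∫_D 𝔸(x)·𝔸(y) dy` equals `c |D|`, then `GOP = (c/2)(c₁/c₀)² + 1/4`.
A rotation `A₀` has `A₀·A₀ = (1/2) Tr I = 3/2`. For the twist,
`A(a,e₁)·A(b,e₁) = 1/2 + cos (a - b)`, and `y ↦ cos (ξ x₃ - ξ y₃)` integrates to zero over the
cube because `ξ L` is a multiple of `2π`, so `c = 1/2`.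
-/

theorem matInner_self_of_mul_transpose_eq_one {A : Matrix (Fin 3) (Fin 3) ℝ}
    (hA : A * Aᵀ = 1) : matInner A A = 3 / 2 := by
  rw [matInner, mul_eq_one_comm.mp hA, trace_one]
  norm_num

theorem matInner_rodrigues_e₁ (a b : ℝ) :
    matInner (rodrigues a ![1, 0, 0]) (rodrigues b ![1, 0, 0]) = 1 / 2 + cos (a - b) := by
  simp [matInner, rodrigues, crossMat, trace_fin_three, mul_apply, Fin.sum_univ_three,
    one_apply, cos_sub]
  ring

theorem setIntegral_univ_pi_comp_eval {ι : Type*} [Fintype ι] [DecidableEq ι]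
    (s : ι → Set ℝ) (i : ι) {E : Type*} [NormedAddCommGroup E] [NormedSpace ℝ E] {f : ℝ → E}
    (hf : AEStronglyMeasurable f (volume.restrict (s i))) :
    ∫ x in Set.univ.pi s, f (x i) =
      (∏ j ∈ Finset.univ.erase i, volume.real (s j)) • ∫ z in s i, f z := by
  rw [volume_pi, Measure.restrict_pi_pi, ← integral_map (measurable_pi_apply i).aemeasurable,
    Measure.pi_map_eval, integral_smul_measure, ENNReal.toReal_prod]
  · simp [measureReal_def]
  · rw [Measure.pi_map_eval]
    exact hf.smul_measure _

theorem setIntegral_box_comp_eval {L : ℝ} (hL : 0 ≤ L) (i : Fin 3) {f : ℝ → ℝ}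
    (hf : AEStronglyMeasurable f (volume.restrict (Set.Icc 0 L))) :
    ∫ x in box L, f (x i) = L ^ 2 * ∫ z in (0 : ℝ)..L, f z := by
  have hbox : box L = Set.univ.pi fun _ => Set.Icc 0 L := (Set.pi_univ_Icc _ _).symm
  rw [hbox, setIntegral_univ_pi_comp_eval (fun _ => Set.Icc 0 L) i hf,
    intervalIntegral.integral_of_le hL, ← integral_Icc_eq_integral_Ioc]
  simp [volume_real_Icc_of_le hL]

theorem volume_real_box {L : ℝ} (hL : 0 ≤ L) : volume.real (box L) = L ^ 3 := by
  rw [measureReal_def, box, Real.volume_Icc_pi_toReal (a := 0) fun _ => hL]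
  simp

theorem integral_cos_sub_mul_eq_zero {ξ L : ℝ} (hξ : ξ ≠ 0) {n : ℤ}
    (hξL : ξ * L = n * (2 * π)) (t : ℝ) :
    ∫ z in (0 : ℝ)..L, cos (t - ξ * z) = 0 := by
  rw [intervalIntegral.integral_comp_sub_mul _ hξ, integral_cos, hξL, sin_sub_int_mul_two_pi]
  simp

theorem GOP_eq_of_setIntegral_matInner_eq {ratio L c : ℝ} (hL : 0 < L)
    {𝔸 : (Fin 3 → ℝ) → Matrix (Fin 3) (Fin 3) ℝ}
    (h𝔸 : ∀ x, ∫ y in box L, matInner (𝔸 x) (𝔸 y) = c * L ^ 3) :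
    GOP ratio L 𝔸 = 1 / 2 * ratio ^ 2 * c + 1 / 4 := by
  simp only [GOP, integral_mul_const, h𝔸, setIntegral_const, volume_real_box hL.le, smul_eq_mul]
  field_simp

theorem setIntegral_box_matInner_twist {L ξ : ℝ} (hL : 0 < L) (hξ : ξ ≠ 0) {n : ℤ}
    (hξL : ξ * L = n * (2 * π)) (x : Fin 3 → ℝ) :
    ∫ y in box L, matInner (rodrigues (ξ * x 2) ![1, 0, 0]) (rodrigues (ξ * y 2) ![1, 0, 0]) =
      1 / 2 * L ^ 3 := by
  have hcos : ∫ y in box L, cos (ξ * x 2 - ξ * y 2) = 0 := by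
    rw [setIntegral_box_comp_eval hL.le 2 (f := fun z => cos (ξ * x 2 - ξ * z))
      (by fun_prop : Continuous _).aestronglyMeasurable, integral_cos_sub_mul_eq_zero hξ hξL,
      mul_zero]
  have hconst : IntegrableOn (fun _ : Fin 3 → ℝ => (1 / 2 : ℝ)) (box L) :=
    integrableOn_const isCompact_Icc.measure_lt_top.ne
  have hint : IntegrableOn (fun y : Fin 3 → ℝ => cos (ξ * x 2 - ξ * y 2)) (box L) :=
    (by fun_prop : Continuous _).integrableOn_Icc
  simp only [matInner_rodrigues_e₁]
  rw [integral_add hconst hint, hcos, setIntegral_const, volume_real_box hL.le, smul_eq_mul]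
  ring

theorem GOP_twist_and_flocking_general (ratio L : ℝ) (hL : 0 < L)
    (n : ℤ) (hn : n ≠ 0) (ξ : ℝ)
    (hξ : ξ = 2 * Real.pi * n / L) :
    GOP ratio L (fun x => rodrigues (ξ * x 2) ![1, 0, 0]) =
      (1 / 4) * ratio ^ 2 + 1 / 4 ∧
    ∀ A₀ : Matrix (Fin 3) (Fin 3) ℝ, A₀ * A₀ᵀ = 1 → A₀.det = 1 →
      GOP ratio L (fun _ => A₀) = (3 / 4) * ratio ^ 2 + 1 / 4 := by
  have hξ0 : ξ ≠ 0 := by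
    have : (n : ℝ) ≠ 0 := Int.cast_ne_zero.2 hn
    rw [hξ]; positivity
  have hξL : ξ * L = n * (2 * π) := by
    rw [hξ, div_mul_cancel₀ _ hL.ne']; ring
  refine ⟨?_, fun A₀ hA₀ _ => ?_⟩
  · rw [GOP_eq_of_setIntegral_matInner_eq hL (setIntegral_box_matInner_twist hL hξ0 hξL)]
    ring
  · rw [GOP_eq_of_setIntegral_matInner_eq hL (c := 3 / 2) fun _ => by
      rw [matInner_self_of_mul_transpose_eq_one hA₀, setIntegral_const, volume_real_box hL.le,
        smul_eq_mul, mul_comm]]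
    ring

theorem GOP_twist_and_flocking (ratio L : ℝ) (hL : 0 < L)
    (hratio : ratio ∈ Set.Ioc (0 : ℝ) 1) (n : ℤ) (hn : n ≠ 0) (ξ : ℝ)
    (hξ : ξ = 2 * Real.pi * n / L) :
    GOP ratio L (fun x => rodrigues (ξ * x 2) ![1, 0, 0]) =
      (1 / 4) * ratio ^ 2 + 1 / 4 ∧
    ∀ A₀ : Matrix (Fin 3) (Fin 3) ℝ, A₀ * A₀ᵀ = 1 → A₀.det = 1 →
      GOP ratio L (fun _ => A₀) = (3 / 4) * ratio ^ 2 + 1 / 4 :=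
  GOP_twist_and_flocking_general ratio L hL n hn ξ hξ
end
end
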